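/- Jackson's q-tangent symmetry: with sin_q(z) = sum_{n≥0} (-1)^n z^(2n+1)/[2n+1]_q! and cos_q(z) = sum_{n≥0} (-1)^n z^(2n)/[2n]_q! over Q(q), one has sin_q(z)·cos_{1/q}(z) - sin_{1/q}(z)·cos_q(z) = 0 as formal power series in z. -/

import Mathlib

noncomputable section
open Finset PowerSeries

abbrev Fq : Type := RatFunc ℚ

/-- The variable `q` as element of the field of rational functions `ℚ(q)`. -/
def qv : Fq := RatFunc.X

/-- The q-integer `[m]_q = 1 + q + ... + q^(m-1)`. -/
def qInt (x : Fq) (m : ℕ) : Fq := ∑ i ∈ Finset.range m, x ^ i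

/-- The q-factorial `[m]_q! = [1]_q [2]_q ⋯ [m]_q`. -/
def qFact (x : Fq) (m : ℕ) : Fq := ∏ i ∈ Finset.range m, qInt x (i + 1)

/-- Jackson's `sin_q(z) = ∑ (-1)^n z^(2n+1)/[2n+1]_q!`. -/
def qsin (x : Fq) : PowerSeries Fq :=
  PowerSeries.mk fun m => if m % 2 = 1 then (-1 : Fq) ^ (m / 2) / qFact x m else 0

/-- Jackson's `cos_q(z) = ∑ (-1)^n z^(2n)/[2n]_q!`. -/
def qcos (x : Fq) : PowerSeries Fq :=
  PowerSeries.mk fun m => if m % 2 = 0 then (-1 : Fq) ^ (m / 2) / qFact x m else 0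

/-!
Let `e_x(z) = ∑ zⁿ / [n]_x!`. It satisfies `e_x(xz) = (1 + (x - 1)z) e_x(z)`, and the
same equation for `e_{1/x}` shows that `h(z) = e_x(z) e_{1/x}(-z)` satisfies `h(xz) = h(z)`; as `x`
is not a root of unity, `h = 1`. Over a ring containing `i` with `i² = -1` one has
`e_x(±iz) = cos_x z ± i sin_x z`, and subtracting `e_x(iz) e_{1/x}(-iz) = 1 = e_x(-iz) e_{1/x}(iz)`
leaves `2i (sin_x cos_{1/x} - sin_{1/x} cos_x) = 0`.
-/

lemma PowerSeries.rescale_C {R : Type*} [CommSemiring R] (a c : R) : rescale a (C c) = C c := by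
  ext n
  rcases n with _ | n <;> simp [coeff_rescale, coeff_C]

lemma PowerSeries.eq_C_of_rescale_eq {K : Type*} [CommRing K] [IsDomain K] {a : K}
    (ha : ¬IsOfFinOrder a) {f : K⟦X⟧} (hf : rescale a f = f) : f = C (constantCoeff f) := by
  ext n
  rcases n with _ | n
  · simp
  · have hpow : a ^ (n + 1) ≠ 1 := fun h =>
      ha (isOfFinOrder_iff_pow_eq_one.mpr ⟨n + 1, n.succ_pos, h⟩)
    have hcoeff : (a ^ (n + 1) - 1) * coeff (n + 1) f = 0 := by
      linear_combination congrArg (coeff (n + 1)) hf - coeff_rescale f a (n + 1)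
    simpa [coeff_C, sub_ne_zero.mpr hpow] using hcoeff

lemma not_isOfFinOrder_inv {G₀ : Type*} [GroupWithZero G₀] {x : G₀} (hx : ¬IsOfFinOrder x) :
    ¬IsOfFinOrder x⁻¹ := by
  simpa [isOfFinOrder_iff_pow_eq_one, inv_pow] using hx

lemma qFact_succ (x : Fq) (n : ℕ) : qFact x (n + 1) = qFact x n * qInt x (n + 1) :=
  prod_range_succ _ n

lemma qInt_mul_sub_one (x : Fq) (n : ℕ) : qInt x n * (x - 1) = x ^ n - 1 :=
  geom_sum_mul x n

lemma qInt_succ_ne_zero {x : Fq} (hx : ¬IsOfFinOrder x) (n : ℕ) : qInt x (n + 1) ≠ 0 := by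
  refine fun h => hx (isOfFinOrder_iff_pow_eq_one.mpr ⟨n + 1, n.succ_pos, ?_⟩)
  rw [← sub_eq_zero, ← qInt_mul_sub_one, h, zero_mul]

lemma qFact_ne_zero {x : Fq} (hx : ¬IsOfFinOrder x) (n : ℕ) : qFact x n ≠ 0 :=
  prod_ne_zero_iff.mpr fun m _ => qInt_succ_ne_zero hx m

def qExp (x : Fq) : PowerSeries Fq := mk fun n => (qFact x n)⁻¹

lemma rescale_qExp {x : Fq} (hx : ¬IsOfFinOrder x) :
    rescale x (qExp x) = (1 + C (x - 1) * X) * qExp x := by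
  ext n
  rcases n with _ | n
  · simp [qExp, qFact]
  · have hfact := qFact_ne_zero hx n
    have hint := qInt_succ_ne_zero hx n
    simp only [qExp, coeff_rescale, coeff_mk, add_mul, one_mul, map_add, mul_assoc, coeff_C_mul,
      coeff_succ_X_mul, qFact_succ]
    field_simp
    linear_combination -qInt_mul_sub_one x (n + 1)

theorem qExp_mul_rescale_qExp_inv {x : Fq} (hx0 : x ≠ 0) (hx : ¬IsOfFinOrder x) :
    qExp x * rescale (-1) (qExp x⁻¹) = 1 := by
  have hinv : rescale (-1) (qExp x⁻¹) = (1 + C (x - 1) * X) * rescale (-x) (qExp x⁻¹) := by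
    calc rescale (-1) (qExp x⁻¹) = rescale (-x) (rescale x⁻¹ (qExp x⁻¹)) := by
          rw [rescale_rescale, inv_mul_eq_div, neg_div_self hx0]
      _ = (1 + C (x - 1) * X) * rescale (-x) (qExp x⁻¹) := by
          rw [rescale_qExp (not_isOfFinOrder_inv hx), map_mul, map_add, map_mul, rescale_X,
            map_one, rescale_C, ← mul_assoc, ← map_mul,
            show (x⁻¹ - 1) * -x = x - 1 by rw [mul_neg, sub_mul, inv_mul_cancel₀ hx0]; ring]
  have hfix : rescale x (qExp x * rescale (-1) (qExp x⁻¹)) = qExp x * rescale (-1) (qExp x⁻¹) := by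
    rw [map_mul, rescale_qExp hx, rescale_rescale, neg_one_mul, hinv]
    ring
  rw [eq_C_of_rescale_eq hx hfix, map_mul, ← coeff_zero_eq_constantCoeff_apply,
    ← coeff_zero_eq_constantCoeff_apply, coeff_rescale]
  simp [qExp, qFact]

section Euler

variable {R : Type*} [CommRing R] [Algebra Fq R]

def qCis (j : R) (x : Fq) : R⟦X⟧ :=
  map (algebraMap Fq R) (qcos x) + C j * map (algebraMap Fq R) (qsin x)

lemma qCis_eq_rescale_qExp {j : R} (hj : j ^ 2 = -1) (x : Fq) :
    qCis j x = rescale j (map (algebraMap Fq R) (qExp x)) := by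
  ext n
  obtain ⟨k, rfl | rfl⟩ := Nat.even_or_odd' n
  · simp [qCis, qExp, qcos, qsin, coeff_rescale, pow_mul, hj, div_eq_mul_inv]
  · have hk : (2 * k + 1) / 2 = k := by omega
    simp [qCis, qExp, qcos, qsin, coeff_rescale, pow_succ, pow_mul, hj, div_eq_mul_inv,
      Nat.add_mod, hk]
    ring

lemma qCis_mul_qCis_neg_inv {j : R} (hj : j ^ 2 = -1) {x : Fq} (hx0 : x ≠ 0)
    (hx : ¬IsOfFinOrder x) : qCis j x * qCis (-j) x⁻¹ = 1 := by
  rw [qCis_eq_rescale_qExp hj, qCis_eq_rescale_qExp (by rw [neg_sq, hj]), ← neg_one_mul j,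
    ← rescale_rescale, ← map_mul, ← map_one (algebraMap Fq R), ← map_neg, rescale_map, ← map_mul,
    qExp_mul_rescale_qExp_inv hx0 hx, map_one, map_one]

end Euler

theorem qsin_mul_qcos_inv {x : Fq} (hx0 : x ≠ 0) (hx : ¬IsOfFinOrder x) :
    qsin x * qcos x⁻¹ = qsin x⁻¹ * qcos x := by
  let i : QuadraticAlgebra Fq (-1) 0 := ⟨0, 1⟩
  have hi : i ^ 2 = -1 := by
    ext <;> simp [i, sq, QuadraticAlgebra.re_one, QuadraticAlgebra.im_one]
  have hiC : C i ^ 2 = -1 := by rw [← map_pow, hi, map_neg, map_one]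
  set φ := PowerSeries.map (algebraMap Fq (QuadraticAlgebra Fq (-1) 0))
  have hφ : Function.Injective φ := map_injective _ QuadraticAlgebra.algebraMap_injective
  have h₁ := qCis_mul_qCis_neg_inv hi hx0 hx
  have h₂ := qCis_mul_qCis_neg_inv (j := -i) (by rw [neg_sq, hi]) hx0 hx
  rw [neg_neg] at h₂
  have htwice : φ (2 * (qsin x * qcos x⁻¹ - qsin x⁻¹ * qcos x)) = 0 := by
    simp only [qCis, map_mul, map_sub, map_ofNat, map_neg] at h₁ h₂ ⊢
    linear_combination (-C i) * (h₁ - h₂) +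
      2 * (φ (qsin x) * φ (qcos x⁻¹) - φ (qsin x⁻¹) * φ (qcos x)) * hiC
  have htwo : (2 : Fq⟦X⟧) ≠ 0 := by
    rw [← map_ofNat C 2]
    exact (map_ne_zero_iff C C_injective).mpr two_ne_zero
  rw [← sub_eq_zero]
  exact (mul_eq_zero.mp (hφ (htwice.trans (map_zero φ).symm))).resolve_left htwo

lemma not_isOfFinOrder_qv : ¬IsOfFinOrder qv := by
  rw [isOfFinOrder_iff_pow_eq_one]
  rintro ⟨n, hn, h⟩
  rw [qv, ← RatFunc.algebraMap_X, ← map_pow, ← map_one (algebraMap (Polynomial ℚ) Fq),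
    (IsFractionRing.injective (Polynomial ℚ) Fq).eq_iff] at h
  simpa [hn.ne'] using congrArg Polynomial.natDegree h

theorem jackson_q_tangent_symmetry :
    qsin qv * qcos qv⁻¹ - qsin qv⁻¹ * qcos qv = 0 :=
  sub_eq_zero.mpr (qsin_mul_qcos_inv RatFunc.X_ne_zero not_isOfFinOrder_qv)
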